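/- Let 𝒜 = {A₁,…,A_m} be a finite set of invertible real d×d matrices, let ρ > 0, and let ‖·‖ be a norm on ℝ^d satisfying max_{1≤i≤m} ‖Aᵢᵀ x‖ = ρ‖x‖ for all x ∈ ℝ^d (a Barabanov norm for the transposed family). Let S = {x : ‖x‖ ≤ 1} be its unit ball and M = S° its polar. Then M is a centrally symmetric convex body satisfying ρM = conv(⋃_{i=1}^m A_i M). -/

import Mathlib

open Matrix Filter Topology Pointwise

/-- Operator norm of a matrix, viewed as a linear operator on `ℝ^d`. -/
noncomputable def matOpNorm {d : ℕ} (B : Matrix (Fin d) (Fin d) ℝ) : ℝ :=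
  ‖LinearMap.toContinuousLinearMap (Matrix.toLin' B)‖

/-- Product `A_{σ_n} ⋯ A_{σ_2} A_{σ_1}` of matrices along an index word `σ`. -/
noncomputable def wordProd {d m n : ℕ} (A : Fin m → Matrix (Fin d) (Fin d) ℝ)
    (σ : Fin n → Fin m) : Matrix (Fin d) (Fin d) ℝ :=
  (List.ofFn (fun k => A (σ k))).prod

/-- The joint spectral radius `ρ(𝒜) = lim_n max_σ ‖A_{σ_n}⋯A_{σ_1}‖^{1/n}`
(stated via `limsup`, which coincides with the limit). -/
noncomputable def jsr {d m : ℕ} (A : Fin m → Matrix (Fin d) (Fin d) ℝ) : ℝ :=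
  Filter.limsup
    (fun n : ℕ => ⨆ σ : Fin n → Fin m, matOpNorm (wordProd A σ) ^ (1 / (n : ℝ))) atTop

/-- `N` is a norm on `ℝ^d`. -/
def IsMatNorm {d : ℕ} (N : (Fin d → ℝ) → ℝ) : Prop :=
  (∀ x, 0 ≤ N x) ∧ (∀ x, N x = 0 → x = 0) ∧
    (∀ (c : ℝ) (x), N (c • x) = |c| * N x) ∧ (∀ x y, N (x + y) ≤ N x + N y)

/-- The family `A` has no common invariant subspace other than `{0}` and `ℝ^d`. -/
def MatSetIrreducible {d m : ℕ} (A : Fin m → Matrix (Fin d) (Fin d) ℝ) : Prop :=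
  ∀ V : Submodule ℝ (Fin d → ℝ), (∀ i, V.map (Matrix.toLin' (A i)) ≤ V) → V = ⊥ ∨ V = ⊤

/-- The polar `X° = {y : |⟨x,y⟩| ≤ 1 ∀ x ∈ X}` of a set `X ⊆ ℝ^d`. -/
def polarSet {d : ℕ} (X : Set (Fin d → ℝ)) : Set (Fin d → ℝ) :=
  {y | ∀ x ∈ X, |∑ j, x j * y j| ≤ 1}

/-- An averaging function: continuous on positive arguments, `γ(t,t) = t`, and
`min{t,s} < γ(t,s) < max{t,s}` for `t ≠ s`. -/
def IsAveraging (γ : ℝ → ℝ → ℝ) : Prop :=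
  ContinuousOn (fun p : ℝ × ℝ => γ p.1 p.2) {p | 0 < p.1 ∧ 0 < p.2} ∧
    (∀ t, 0 < t → γ t t = t) ∧
    (∀ t s, 0 < t → 0 < s → t ≠ s → min t s < γ t s ∧ γ t s < max t s)

/-- `r_k(𝒜,x) = max_{σ ∈ {1,…,m}^k} ‖A_{σ_k}⋯A_{σ_1} x‖`. -/
noncomputable def rsem {d m : ℕ} (A : Fin m → Matrix (Fin d) (Fin d) ℝ)
    (N : (Fin d → ℝ) → ℝ) (k : ℕ) (x : Fin d → ℝ) : ℝ :=
  ⨆ σ : Fin k → Fin m, N (wordProd A σ *ᵥ x)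

/-- `‖x‖_n = max{‖x‖, κ⁻¹ r₁(𝒜,x), …, κ^{-(n-1)} r_{n-1}(𝒜,x)}`. -/
noncomputable def relaxNorm {d m : ℕ} (A : Fin m → Matrix (Fin d) (Fin d) ℝ)
    (N : (Fin d → ℝ) → ℝ) (κ : ℝ) (n : ℕ) (x : Fin d → ℝ) : ℝ :=
  max (N x) (⨆ k ∈ Finset.Ico 1 n, (1 / κ ^ k) * rsem A N k x)

/-- The operator norm of a matrix induced by the vector norm `N`. -/
noncomputable def inducedOpNorm {d : ℕ} (N : (Fin d → ℝ) → ℝ)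
    (B : Matrix (Fin d) (Fin d) ℝ) : ℝ :=
  ⨆ x : {x : Fin d → ℝ // x ≠ 0}, N (B *ᵥ (x : Fin d → ℝ)) / N (x : Fin d → ℝ)

/-- The spectral radius of a matrix: the maximum absolute value of its eigenvalues. -/
noncomputable def specRad {d : ℕ} (B : Matrix (Fin d) (Fin d) ℝ) : ℝ :=
  sSup (abs '' spectrum ℝ B)

/-- The Euclidean norm on `ℝ^d`. -/
noncomputable def euclNorm {d : ℕ} (x : Fin d → ℝ) : ℝ :=
  Real.sqrt (∑ j, x j ^ 2)

/-!
By Hahn–Banach, the polar `M` of the unit ball of `N` is the unit ball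
`{y | ∀ x, x ⬝ᵥ y ≤ N x}` of the dual norm, and its support function `x ↦ max_{y ∈ M} x ⬝ᵥ y`
is exactly `N`. Hence `M` is compact and symmetric, and it spans `ℝ^d` because `N` vanishes only
at `0`, so it has interior points. The support function of `conv ⋃ᵢ Aᵢ M` in direction `x` is
`maxᵢ N (Aᵢᵀ x) = ρ N x`, that of `ρ M`; two compact convex sets with the same support function
coincide, by separation.
-/

theorem convexJoin_eq_image {E : Type*} [AddCommGroup E] [Module ℝ E] (s t : Set E) :
    convexJoin ℝ s t =
      (fun p : ℝ × E × E => (1 - p.1) • p.2.1 + p.1 • p.2.2) '' (Set.Icc 0 1 ×ˢ s ×ˢ t) := by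
  ext z
  simp only [mem_convexJoin, segment_eq_image, Set.mem_image, Set.mem_prod, Prod.exists]
  grind

section ConvexHull

variable {E : Type*} [AddCommGroup E] [Module ℝ E] [TopologicalSpace E]
  [IsTopologicalAddGroup E] [ContinuousSMul ℝ E]

theorem IsCompact.convexJoin {s t : Set E} (hs : IsCompact s) (ht : IsCompact t) :
    IsCompact (convexJoin ℝ s t) := by
  rw [convexJoin_eq_image]
  exact (isCompact_Icc.prod (hs.prod ht)).image (by fun_prop)

theorem IsCompact.convexHull_union {s t : Set E} (hs : IsCompact (convexHull ℝ s))
    (ht : IsCompact (convexHull ℝ t)) : IsCompact (convexHull ℝ (s ∪ t)) := by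
  rcases s.eq_empty_or_nonempty with rfl | hs₀
  · simpa using ht
  rcases t.eq_empty_or_nonempty with rfl | ht₀
  · simpa using hs
  rw [_root_.convexHull_union hs₀ ht₀]
  exact hs.convexJoin ht

theorem isCompact_convexHull_iUnion {ι : Type*} [Finite ι] {K : ι → Set E}
    (hK : ∀ i, IsCompact (convexHull ℝ (K i))) : IsCompact (convexHull ℝ (⋃ i, K i)) := by
  classical
  cases nonempty_fintype ι
  suffices ∀ s : Finset ι, IsCompact (convexHull ℝ (⋃ i ∈ s, K i)) by
    simpa using this Finset.univ
  intro s
  induction s using Finset.induction_on with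
  | empty => simp
  | insert i s _ ih =>
    rw [Finset.set_biUnion_insert]
    exact (hK i).convexHull_union ih

end ConvexHull

theorem dotProduct_dotProductEquiv_symm {R n : Type*} [CommSemiring R] [Fintype n]
    [DecidableEq n] (f : Module.Dual R (n → R)) (x : n → R) :
    (dotProductEquiv R n).symm f ⬝ᵥ x = f x := by
  rw [← dotProductEquiv_apply_apply, LinearEquiv.apply_symm_apply]

def dualBall {d : ℕ} (N : (Fin d → ℝ) → ℝ) : Set (Fin d → ℝ) :=
  {y | ∀ x, x ⬝ᵥ y ≤ N x}

theorem convex_dualBall {d : ℕ} (N : (Fin d → ℝ) → ℝ) : Convex ℝ (dualBall N) := by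
  rw [dualBall, Set.ofPred_forall]
  exact convex_iInter fun x => convex_halfSpace_le (dotProductBilin ℝ ℝ x).isLinear (N x)

theorem isClosed_dualBall {d : ℕ} (N : (Fin d → ℝ) → ℝ) : IsClosed (dualBall N) := by
  rw [dualBall, Set.ofPred_forall]
  exact isClosed_iInter fun x => isClosed_le (by fun_prop) continuous_const

namespace IsMatNorm

variable {d : ℕ} {N : (Fin d → ℝ) → ℝ}

theorem map_zero (hN : IsMatNorm N) : N 0 = 0 := by
  simpa using hN.2.2.1 0 0

theorem map_neg (hN : IsMatNorm N) (x : Fin d → ℝ) : N (-x) = N x := by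
  simpa using hN.2.2.1 (-1) x

theorem pos (hN : IsMatNorm N) {x : Fin d → ℝ} (hx : x ≠ 0) : 0 < N x :=
  (hN.1 x).lt_of_ne' (mt (hN.2.1 x) hx)

theorem polarSet_unitBall (hN : IsMatNorm N) : polarSet {x | N x ≤ 1} = dualBall N := by
  ext y
  constructor
  · intro hy x
    rcases eq_or_ne x 0 with rfl | hx
    · simp [hN.map_zero]
    have hNx := hN.pos hx
    have hx₁ : N ((N x)⁻¹ • x) ≤ 1 := by
      rw [hN.2.2.1, abs_of_pos (inv_pos.2 hNx), inv_mul_cancel₀ hNx.ne']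
    have := (abs_le.1 (hy _ hx₁)).2
    change ((N x)⁻¹ • x) ⬝ᵥ y ≤ 1 at this
    rwa [smul_dotProduct, smul_eq_mul, inv_mul_le_iff₀ hNx, mul_one] at this
  · intro hy x (hx : N x ≤ 1)
    change |x ⬝ᵥ y| ≤ 1
    have := hy (-x)
    rw [neg_dotProduct, hN.map_neg] at this
    exact abs_le.2 ⟨by linarith, (hy x).trans hx⟩

theorem exists_mem_dualBall_dotProduct_eq (hN : IsMatNorm N) (v : Fin d → ℝ) :
    ∃ w ∈ dualBall N, v ⬝ᵥ w = N v := by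
  have hN₀ := hN.map_zero
  obtain ⟨hN_nonneg, -, hN_smul, hN_add⟩ := hN
  let f : (Fin d → ℝ) →ₗ.[ℝ] ℝ := LinearPMap.mkSpanSingleton' v (N v) fun c hc => by
    rcases smul_eq_zero.1 hc with rfl | rfl <;> simp [hN₀]
  have hf : ∀ x : f.domain, f x ≤ N x := by
    rintro ⟨x, hx⟩
    obtain ⟨c, rfl⟩ := Submodule.mem_span_singleton.1 hx
    rw [LinearPMap.mkSpanSingleton'_apply, hN_smul, smul_eq_mul]
    exact mul_le_mul_of_nonneg_right (le_abs_self c) (hN_nonneg v)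
  obtain ⟨g, hgf, hgN⟩ := exists_extension_of_le_sublinear f N
    (fun c hc x => by rw [hN_smul, abs_of_pos hc]) hN_add hf
  refine ⟨(dotProductEquiv ℝ (Fin d)).symm g, fun x => ?_, ?_⟩
  · rw [dotProduct_comm, dotProduct_dotProductEquiv_symm]
    exact hgN x
  · rw [dotProduct_comm, dotProduct_dotProductEquiv_symm,
      hgf ⟨v, Submodule.mem_span_singleton_self v⟩]
    exact LinearPMap.mkSpanSingleton'_apply_self _ _ _ _

theorem neg_dualBall (hN : IsMatNorm N) : -dualBall N = dualBall N := by
  suffices ∀ y ∈ dualBall N, -y ∈ dualBall N from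
    Set.Subset.antisymm (fun y hy => neg_neg y ▸ this _ hy) this
  intro y hy x
  rw [dotProduct_neg, ← neg_dotProduct, ← hN.map_neg]
  exact hy (-x)

theorem isCompact_dualBall (hN : IsMatNorm N) : IsCompact (dualBall N) := by
  refine (isCompact_univ_pi fun j => isCompact_Icc (a := -N (Pi.single j 1))
    (b := N (Pi.single j 1))).of_isClosed_subset (isClosed_dualBall N) fun y hy j _ => ⟨?_, ?_⟩
  · have := hy (-Pi.single j 1)
    rw [hN.map_neg, neg_dotProduct, single_dotProduct, one_mul] at this
    linarith
  · simpa using hy (Pi.single j 1)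

theorem span_dualBall (hN : IsMatNorm N) : Submodule.span ℝ (dualBall N) = ⊤ := by
  by_contra h
  obtain ⟨f, hf, hker⟩ :=
    (Submodule.span ℝ (dualBall N)).exists_le_ker_of_lt_top (lt_top_iff_ne_top.2 h)
  set v := (dotProductEquiv ℝ (Fin d)).symm f
  obtain ⟨w, hw, hvw⟩ := hN.exists_mem_dualBall_dotProduct_eq v
  have hfw : f w = 0 := hker (Submodule.subset_span hw)
  rw [← dotProduct_dotProductEquiv_symm, hvw] at hfw
  exact (hN.pos ((LinearEquiv.map_ne_zero_iff _).2 hf)).ne' hfw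

theorem interior_dualBall_nonempty (hN : IsMatNorm N) : (interior (dualBall N)).Nonempty := by
  have h₀ : (0 : Fin d → ℝ) ∈ dualBall N := fun x => by simpa using hN.1 x
  rw [(convex_dualBall N).interior_nonempty_iff_affineSpan_eq_top,
    AffineSubspace.affineSpan_eq_top_iff_vectorSpan_eq_top_of_nonempty ℝ _ _ ⟨0, h₀⟩,
    vectorSpan_eq_span_vsub_set_right ℝ h₀]
  simpa using hN.span_dualBall

end IsMatNorm

section Barabanov

variable {d : ℕ} {N : (Fin d → ℝ) → ℝ} {ι : Type*} {A : ι → Matrix (Fin d) (Fin d) ℝ} {ρ : ℝ}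

theorem mulVec_mem_smul_dualBall {B : Matrix (Fin d) (Fin d) ℝ} (hρ : 0 < ρ)
    (hB : ∀ x, N (Bᵀ *ᵥ x) ≤ ρ * N x) {y : Fin d → ℝ} (hy : y ∈ dualBall N) :
    B *ᵥ y ∈ ρ • dualBall N := by
  rw [Set.mem_smul_set_iff_inv_smul_mem₀ hρ.ne']
  intro x
  rw [dotProduct_smul, smul_eq_mul, ← dotProduct_transpose_mulVec, dotProduct_comm,
    inv_mul_le_iff₀ hρ]
  exact (hy _).trans (hB x)

theorem convexHull_iUnion_mulVec_dualBall_subset (hρ : 0 < ρ)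
    (hA : ∀ i x, N ((A i)ᵀ *ᵥ x) ≤ ρ * N x) :
    convexHull ℝ (⋃ i, (A i *ᵥ ·) '' dualBall N) ⊆ ρ • dualBall N :=
  convexHull_min (Set.iUnion_subset fun i => Set.image_subset_iff.2 fun _ hy =>
    mulVec_mem_smul_dualBall hρ (hA i) hy) ((convex_dualBall N).smul ρ)

theorem smul_dualBall_subset_convexHull_iUnion_mulVec [Finite ι] (hN : IsMatNorm N)
    (hρ : 0 ≤ ρ) (hA : ∀ x, ∃ i, ρ * N x ≤ N ((A i)ᵀ *ᵥ x)) :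
    ρ • dualBall N ⊆ convexHull ℝ (⋃ i, (A i *ᵥ ·) '' dualBall N) := by
  have hC : IsClosed (convexHull ℝ (⋃ i, (A i *ᵥ ·) '' dualBall N)) := by
    refine (isCompact_convexHull_iUnion fun i => ?_).isClosed
    have hconv : Convex ℝ ((A i *ᵥ ·) '' dualBall N) :=
      (convex_dualBall N).linear_image (mulVecLin (A i))
    rw [hconv.convexHull_eq]
    exact hN.isCompact_dualBall.image (continuous_const.matrix_mulVec continuous_id)
  rintro _ ⟨y, hy, rfl⟩
  by_contra hyC
  obtain ⟨f, u, hfC, hfy⟩ := geometric_hahn_banach_closed_point (convex_convexHull ℝ _) hC hyC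
  set v := (dotProductEquiv ℝ (Fin d)).symm f.toLinearMap
  have hf : ∀ z, f z = v ⬝ᵥ z := fun z => (dotProduct_dotProductEquiv_symm _ z).symm
  obtain ⟨i, hi⟩ := hA v
  obtain ⟨w, hw, hwv⟩ := hN.exists_mem_dualBall_dotProduct_eq ((A i)ᵀ *ᵥ v)
  have hAw := hfC _ (subset_convexHull ℝ _ (Set.mem_iUnion.2 ⟨i, w, hw, rfl⟩))
  rw [hf, ← dotProduct_transpose_mulVec, dotProduct_comm, hwv] at hAw
  rw [hf, dotProduct_smul, smul_eq_mul] at hfy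
  linarith [mul_le_mul_of_nonneg_left (hy v) hρ]

theorem smul_dualBall_eq_convexHull_iUnion_mulVec [Finite ι] [Nonempty ι] (hN : IsMatNorm N)
    (hρ : 0 < ρ) (hbar : ∀ x, ⨆ i, N ((A i)ᵀ *ᵥ x) = ρ * N x) :
    ρ • dualBall N = convexHull ℝ (⋃ i, (A i *ᵥ ·) '' dualBall N) := by
  refine (smul_dualBall_subset_convexHull_iUnion_mulVec hN hρ.le fun x => ?_).antisymm
    (convexHull_iUnion_mulVec_dualBall_subset hρ fun i x => ?_)
  · obtain ⟨i, hi⟩ := exists_eq_ciSup_of_finite (f := fun i => N ((A i)ᵀ *ᵥ x))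
    exact ⟨i, (hbar x ▸ hi).ge⟩
  · exact hbar x ▸ le_ciSup (f := fun i => N ((A i)ᵀ *ᵥ x)) (Set.finite_range _).bddAbove i

end Barabanov

theorem stmt6_general {d m : ℕ} (hm : 0 < m)
    (A : Fin m → Matrix (Fin d) (Fin d) ℝ)
    (N : (Fin d → ℝ) → ℝ) (hN : IsMatNorm N)
    (ρ : ℝ) (hρ : 0 < ρ)
    (hbar : ∀ x, (⨆ i, N ((A i)ᵀ *ᵥ x)) = ρ * N x)
    (S : Set (Fin d → ℝ)) (hS : S = {x | N x ≤ 1})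
    (M : Set (Fin d → ℝ)) (hM : M = polarSet S) :
    Convex ℝ M ∧ IsCompact M ∧ (interior M).Nonempty ∧ -M = M ∧
      ρ • M = convexHull ℝ (⋃ i, (fun x => A i *ᵥ x) '' M) := by
  have : Nonempty (Fin m) := ⟨⟨0, hm⟩⟩
  rw [hM, hS, hN.polarSet_unitBall]
  exact ⟨convex_dualBall N, hN.isCompact_dualBall, hN.interior_dualBall_nonempty,
    hN.neg_dualBall, smul_dualBall_eq_convexHull_iUnion_mulVec hN hρ hbar⟩

/-- if `‖·‖` is a Barabanov norm for the transposed family, then the polar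
`M = S°` of its unit ball is a centrally symmetric convex body with
`ρM = conv(⋃ᵢ AᵢM)`. -/
theorem stmt6 {d m : ℕ} (hm : 0 < m)
    (A : Fin m → Matrix (Fin d) (Fin d) ℝ) (hinv : ∀ i, IsUnit (A i))
    (N : (Fin d → ℝ) → ℝ) (hN : IsMatNorm N)
    (ρ : ℝ) (hρ : 0 < ρ)
    (hbar : ∀ x, (⨆ i, N ((A i)ᵀ *ᵥ x)) = ρ * N x)
    (S : Set (Fin d → ℝ)) (hS : S = {x | N x ≤ 1})
    (M : Set (Fin d → ℝ)) (hM : M = polarSet S) :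
    Convex ℝ M ∧ IsCompact M ∧ (interior M).Nonempty ∧ -M = M ∧
      ρ • M = convexHull ℝ (⋃ i, (fun x => A i *ᵥ x) '' M) :=
  stmt6_general hm A N hN ρ hρ hbar S hS M hM
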